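/- If an Eulerian multigraph G contains two edge-disjoint cycles that have more than two vertices in common, then c(G) < ν(G), i.e., G admits cycle decompositions of at least two different sizes. -/

import Mathlib

open scoped Classical

/-- A finite multigraph without loops: a vertex type, an edge type, and an
incidence map assigning to each edge an unordered pair of distinct vertices. -/
structure MGraph where
  V : Type
  E : Type
  finV : Finite V
  finE : Finite E
  ends : E → Sym2 V
  noLoop : ∀ e, ¬ (ends e).IsDiag

namespace MGraph

variable (G : MGraph)

/-- Degree of a vertex counting only edges in the edge set `F`. -/
noncomputable def degOn (F : Set G.E) (v : G.V) : ℕ := {e | e ∈ F ∧ v ∈ G.ends e}.ncard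

/-- Degree of a vertex. -/
noncomputable def deg (v : G.V) : ℕ := G.degOn Set.univ v

/-- Adjacency using only edges from `F`. -/
def AdjOn (F : Set G.E) (a b : G.V) : Prop := ∃ e ∈ F, G.ends e = s(a, b)

/-- Reachability using only edges from `F`. -/
def ReachOn (F : Set G.E) : G.V → G.V → Prop := Relation.ReflTransGen (G.AdjOn F)

/-- Connectivity of a multigraph. -/
def Connected : Prop := Nonempty G.V ∧ ∀ a b : G.V, G.ReachOn Set.univ a b

/-- A set of edges forms a cycle: it is nonempty, every vertex has degree 0 or 2
in it, and any two of its endpoints are joined by a path inside it. -/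
def IsCycle (C : Set G.E) : Prop :=
  C.Nonempty ∧ (∀ v, G.degOn C v = 0 ∨ G.degOn C v = 2) ∧
    ∀ e ∈ C, ∀ f ∈ C, ∀ a b : G.V, a ∈ G.ends e → b ∈ G.ends f → G.ReachOn C a b

/-- A cycle decomposition of the edge set `F`: a set of cycles inside `F` such
that every edge of `F` lies in exactly one of them. -/
def IsCycleDecompOn (F : Set G.E) (D : Set (Set G.E)) : Prop :=
  (∀ C ∈ D, G.IsCycle C ∧ C ⊆ F) ∧ ∀ e ∈ F, ∃! C, C ∈ D ∧ e ∈ C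

/-- A cycle decomposition of the graph. -/
def IsCycleDecomp (D : Set (Set G.E)) : Prop := G.IsCycleDecompOn Set.univ D

/-- Minimum number of cycles in a cycle decomposition of `F`. -/
noncomputable def cOn (F : Set G.E) : ℕ :=
  sInf {n | ∃ D, G.IsCycleDecompOn F D ∧ D.ncard = n}

/-- Maximum number of cycles in a cycle decomposition of `F`. -/
noncomputable def nuOn (F : Set G.E) : ℕ :=
  sSup {n | ∃ D, G.IsCycleDecompOn F D ∧ D.ncard = n}

/-- Minimum cycle number. -/
noncomputable def c : ℕ := G.cOn Set.univ

/-- Maximum cycle number. -/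
noncomputable def nu : ℕ := G.nuOn Set.univ

/-- A multigraph is Eulerian if it admits a closed walk traversing every edge
exactly once. -/
def IsEulerian : Prop :=
  ∃ (vs : List G.V) (es : List G.E),
    vs.length = es.length + 1 ∧
    (∀ (i : ℕ) (e : G.E) (a b : G.V), es[i]? = some e → vs[i]? = some a →
      vs[i + 1]? = some b → G.ends e = s(a, b)) ∧
    vs.head? = vs.getLast? ∧ es.Nodup ∧ ∀ e : G.E, e ∈ es

/-- A cut-edge (bridge): its endpoints are disconnected after its removal. -/
def IsBridge (e : G.E) : Prop :=
  ∃ a b, G.ends e = s(a, b) ∧ ¬ G.ReachOn {e}ᶜ a b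

/-- 2-edge-connectivity: connected and without cut-edges. -/
def TwoEdgeConnected : Prop := G.Connected ∧ ∀ e, ¬ G.IsBridge e

/-- Reachability avoiding a vertex. -/
def ReachAvoid (v : G.V) (a b : G.V) : Prop :=
  Relation.ReflTransGen (fun x y => x ≠ v ∧ y ≠ v ∧ G.AdjOn Set.univ x y) a b

/-- A cut-vertex: two vertices in the same component get separated by its removal. -/
def IsCutVertex (v : G.V) : Prop :=
  ∃ a b, a ≠ v ∧ b ≠ v ∧ G.ReachOn Set.univ a b ∧ ¬ G.ReachAvoid v a b

/-- Biconnected: connected, at least two vertices, and without cut-vertices. -/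
def Biconnected : Prop :=
  G.Connected ∧ 2 ≤ Nat.card G.V ∧ ∀ v, ¬ G.IsCutVertex v

/-- The vertices covered by a set of edges. -/
def VertexSetOf (C : Set G.E) : Set G.V := {v | ∃ e ∈ C, v ∈ G.ends e}

/-- No two edge-disjoint cycles share more than two vertices. -/
def NoTwoCyclesShareThree : Prop :=
  ∀ C1 C2 : Set G.E, G.IsCycle C1 → G.IsCycle C2 → Disjoint C1 C2 →
    (G.VertexSetOf C1 ∩ G.VertexSetOf C2).ncard ≤ 2

/-- An Eulerian multiedge: two vertices joined by an even positive number of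
parallel edges. -/
def IsEulerianMultiedge : Prop :=
  Nat.card G.V = 2 ∧ 0 < Nat.card G.E ∧ Even (Nat.card G.E)

end MGraph

/-- Isomorphism of multigraphs. -/
structure MIso (G H : MGraph) where
  vEquiv : G.V ≃ H.V
  eEquiv : G.E ≃ H.E
  ends_eq : ∀ e, H.ends (eEquiv e) = (G.ends e).map vEquiv

namespace MGraph

/-- Vertex-identification: glue `u1 ∈ V(G1)` with `u2 ∈ V(G2)`. -/
noncomputable def vertexIdent (G1 G2 : MGraph) (u1 : G1.V) (u2 : G2.V) : MGraph where
  V := G1.V ⊕ {v : G2.V // v ≠ u2}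
  E := G1.E ⊕ G2.E
  finV := by have := G1.finV; have := G2.finV; infer_instance
  finE := by have := G1.finE; have := G2.finE; infer_instance
  ends := fun e =>
    match e with
    | Sum.inl e => (G1.ends e).map Sum.inl
    | Sum.inr e => (G2.ends e).map
        (fun v => if h : v = u2 then Sum.inl u1 else Sum.inr ⟨v, h⟩)
  noLoop := by
    rintro (e | e) h
    · exact G1.noLoop e ((Sym2.isDiag_map Sum.inl_injective).mp h)
    · refine G2.noLoop e ((Sym2.isDiag_map ?_).mp h)
      intro a b hab
      by_cases ha : a = u2 <;> by_cases hb : b = u2 <;>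
        simp [ha, hb] at hab ⊢ <;> simp_all

/-- Edge-identification: delete `e1` and `e2` (with endpoints `u1, v1` resp.
`u2, v2`) and add the new edges `u1u2` and `v1v2`. -/
def edgeIdent (G1 G2 : MGraph) (e1 : G1.E) (e2 : G2.E)
    (u1 v1 : G1.V) (u2 v2 : G2.V) : MGraph where
  V := G1.V ⊕ G2.V
  E := {e : G1.E // e ≠ e1} ⊕ {e : G2.E // e ≠ e2} ⊕ Bool
  finV := by have := G1.finV; have := G2.finV; infer_instance
  finE := by have := G1.finE; have := G2.finE; infer_instance
  ends := fun e =>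
    match e with
    | Sum.inl e => (G1.ends e.1).map Sum.inl
    | Sum.inr (Sum.inl e) => (G2.ends e.1).map Sum.inr
    | Sum.inr (Sum.inr true) => s(Sum.inl u1, Sum.inr u2)
    | Sum.inr (Sum.inr false) => s(Sum.inl v1, Sum.inr v2)
  noLoop := by
    rintro (e | e | b) h
    · exact G1.noLoop e.1 ((Sym2.isDiag_map Sum.inl_injective).mp h)
    · exact G2.noLoop e.1 ((Sym2.isDiag_map Sum.inr_injective).mp h)
    · cases b <;> simp [Sym2.mk_isDiag_iff] at h

/-- Vertex-edge-identification: identify `v1` with `v2`, delete `e1 = u1v1`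
and `e2 = u2v2`, and add a new edge `u1u2`. -/
noncomputable def vertexEdgeIdent (G1 G2 : MGraph) (e1 : G1.E) (e2 : G2.E)
    (u1 v1 : G1.V) (u2 v2 : G2.V) (h2 : G2.ends e2 = s(u2, v2)) : MGraph where
  V := G1.V ⊕ {w : G2.V // w ≠ v2}
  E := {e : G1.E // e ≠ e1} ⊕ {e : G2.E // e ≠ e2} ⊕ Unit
  finV := by have := G1.finV; have := G2.finV; infer_instance
  finE := by have := G1.finE; have := G2.finE; infer_instance
  ends := fun e =>
    match e with
    | Sum.inl e => (G1.ends e.1).map Sum.inl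
    | Sum.inr (Sum.inl e) => (G2.ends e.1).map
        (fun w => if h : w = v2 then Sum.inl v1 else Sum.inr ⟨w, h⟩)
    | Sum.inr (Sum.inr _) =>
        s(Sum.inl u1, Sum.inr ⟨u2, fun h =>
          G2.noLoop e2 (by rw [h2, h]; exact Sym2.mk_isDiag_iff.mpr rfl)⟩)
  noLoop := by
    rintro (e | e | u) h
    · exact G1.noLoop e.1 ((Sym2.isDiag_map Sum.inl_injective).mp h)
    · refine G2.noLoop e.1 ((Sym2.isDiag_map ?_).mp h)
      intro a b hab
      by_cases ha : a = v2 <;> by_cases hb : b = v2 <;>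
        simp [ha, hb] at hab ⊢ <;> simp_all
    · simp [Sym2.mk_isDiag_iff] at h

/-- Delete an edge from a multigraph. -/
def deleteEdge (G : MGraph) (e : G.E) : MGraph where
  V := G.V
  E := {f : G.E // f ≠ e}
  finV := G.finV
  finE := by have := G.finE; infer_instance
  ends := fun f => G.ends f.1
  noLoop := fun f => G.noLoop f.1

/-- `Sym2.pmap`-style map into a subtype. -/
noncomputable def sym2Pmap {α β : Type} {p : α → Prop} (f : ∀ a, p a → β)
    (s : Sym2 α) (h : ∀ a ∈ s, p a) : Sym2 β :=
  let z := Classical.choose (Quot.exists_rep s)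
  s(f z.1 (h z.1 (by
      have hz : Quot.mk _ z = s := Classical.choose_spec (Quot.exists_rep s)
      rw [← hz]; exact Sym2.mem_mk_left z.1 z.2)),
    f z.2 (h z.2 (by
      have hz : Quot.mk _ z = s := Classical.choose_spec (Quot.exists_rep s)
      rw [← hz]; exact Sym2.mem_mk_right z.1 z.2)))

/-- Delete a vertex (and all incident edges) from a multigraph. -/
noncomputable def deleteVertex (G : MGraph) (v : G.V) : MGraph where
  V := {w : G.V // w ≠ v}
  E := {e : G.E // v ∉ G.ends e}
  finV := by have := G.finV; infer_instance
  finE := by have := G.finE; infer_instance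
  ends := fun e => sym2Pmap (fun a ha => (⟨a, ha⟩ : {w : G.V // w ≠ v}))
    (G.ends e.1) (fun a ha hav => e.2 (hav ▸ ha))
  noLoop := by
    rintro ⟨e, he⟩ h
    apply G.noLoop e
    unfold sym2Pmap at h
    have hz : Quot.mk _ (Classical.choose (Quot.exists_rep (G.ends e))) = G.ends e :=
      Classical.choose_spec (Quot.exists_rep (G.ends e))
    rw [Sym2.mk_isDiag_iff] at h
    have : (Classical.choose (Quot.exists_rep (G.ends e))).1 =
        (Classical.choose (Quot.exists_rep (G.ends e))).2 := congrArg Subtype.val h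
    rw [← hz]
    exact Sym2.mk_isDiag_iff.mpr this

end MGraph

/-- A tree decomposition of a multigraph: a tree of bags covering all vertices
and edges such that the bags containing a given vertex form a subtree. -/
structure TreeDecomp (G : MGraph) where
  ι : Type
  t : SimpleGraph ι
  isTree : t.IsTree
  bag : ι → Set G.V
  covers_vertex : ∀ v : G.V, ∃ i, v ∈ bag i
  covers_edge : ∀ e : G.E, ∃ i, ∀ v ∈ G.ends e, v ∈ bag i
  bags_connected : ∀ v : G.V, (SimpleGraph.induce {i | v ∈ bag i} t).Connected

namespace MGraph

/-- The graph has treewidth at most `k`. -/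
def twLE (G : MGraph) (k : ℕ) : Prop :=
  ∃ T : TreeDecomp G, ∀ i, (T.bag i).ncard ≤ k + 1

/-- Treewidth of a multigraph. -/
noncomputable def treewidth (G : MGraph) : ℕ := sInf {k | G.twLE k}

/-- The closed necklace on `n ≥ 2` vertices: a cycle of length `n` with all
of its edges doubled. -/
def necklace (n : ℕ) (hn : 2 ≤ n) : MGraph where
  V := ZMod n
  E := ZMod n × Bool
  finV := by have : NeZero n := ⟨by omega⟩; infer_instance
  finE := by have : NeZero n := ⟨by omega⟩; infer_instance
  ends := fun e => s(e.1, e.1 + 1)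
  noLoop := by
    have : Fact (1 < n) := ⟨hn⟩
    intro e h
    rw [Sym2.mk_isDiag_iff] at h
    exact one_ne_zero (left_eq_add.mp h)

end MGraph

/-!
Take three common vertices `a`, `b`, `c`. Deleting `b` from the cycle `Cᵢ` leaves a path through
`a` and `c`, so `Cᵢ` contains an `{a, c}`-join `Pᵢ` avoiding `b`, and `P₁ ∪ P₂` is a nonempty even
edge set, which contains a cycle `K` missing `b`. The even set `(C₁ ∪ C₂) \ K` has degree 4 at `b`,
so every cycle decomposition of it has at least two cycles. Hence `C₁ ∪ C₂` decomposes both into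
two and into at least three cycles, and completing both by one decomposition of the even rest of
the Eulerian graph (Veblen) gives `c(G) < ν(G)`.
-/

namespace MGraph

variable (G : MGraph)

def IsEven (F : Set G.E) : Prop := ∀ v, Even (G.degOn F v)

/-- A `{x, y}`-join; for `x = y` this says that `P` is even. -/
def IsJoin (P : Set G.E) (x y : G.V) : Prop := ∀ v, Odd (G.degOn P v) ↔ ¬(v = x ↔ v = y)

def incidenceSet (v : G.V) : Set G.E := {e | v ∈ G.ends e}

def componentEdges (F : Set G.E) (x : G.V) : Set G.E :=
  {e | e ∈ F ∧ ∃ a ∈ G.ends e, G.ReachOn F x a}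

variable {G}

lemma degOn_union {A B : Set G.E} (h : Disjoint A B) (v : G.V) :
    G.degOn (A ∪ B) v = G.degOn A v + G.degOn B v := by
  have := G.finE
  have hdisj : Disjoint {e | e ∈ A ∧ v ∈ G.ends e} {e | e ∈ B ∧ v ∈ G.ends e} :=
    Set.disjoint_left.mpr fun e he1 he2 => Set.disjoint_left.mp h he1.1 he2.1
  rw [degOn, degOn, degOn, ← Set.ncard_union_eq hdisj]
  congr 1
  ext e
  simp only [Set.mem_union, Set.mem_ofPred_eq]
  tauto

lemma degOn_sdiff_add {A B : Set G.E} (h : B ⊆ A) (v : G.V) :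
    G.degOn (A \ B) v + G.degOn B v = G.degOn A v := by
  rw [← degOn_union Set.disjoint_sdiff_left, Set.sdiff_union_of_subset h]

lemma degOn_mono {A B : Set G.E} (h : A ⊆ B) (v : G.V) : G.degOn A v ≤ G.degOn B v := by
  have := G.finE
  exact Set.ncard_le_ncard fun e he => ⟨h he.1, he.2⟩

lemma degOn_pos {F : Set G.E} {v : G.V} : 0 < G.degOn F v ↔ ∃ e ∈ F, v ∈ G.ends e := by
  have := G.finE
  rw [degOn, Set.ncard_pos]
  rfl

lemma degOn_eq_zero {F : Set G.E} {v : G.V} : G.degOn F v = 0 ↔ ∀ e ∈ F, v ∉ G.ends e := by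
  rw [← Nat.le_zero, ← not_lt, degOn_pos]
  simp only [not_exists, not_and]

lemma degOn_singleton (e : G.E) (v : G.V) :
    G.degOn {e} v = if v ∈ G.ends e then 1 else 0 := by
  have := G.finE
  split_ifs with h
  · rw [degOn, ← Set.ncard_singleton e]
    congr 1
    ext f
    simp only [Set.mem_singleton_iff, Set.mem_ofPred_eq, and_iff_left_iff_imp]
    rintro rfl
    exact h
  · rw [degOn, Set.ncard_eq_zero]
    ext f
    simp only [Set.mem_singleton_iff, Set.mem_ofPred_eq, Set.mem_empty_iff_false, iff_false]
    rintro ⟨rfl, hf⟩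
    exact h hf

lemma odd_degOn_symmDiff (A B : Set G.E) (v : G.V) :
    Odd (G.degOn (symmDiff A B) v) ↔ ¬(Odd (G.degOn A v) ↔ Odd (G.degOn B v)) := by
  have hAB := degOn_union (G := G) (disjoint_sdiff_sdiff (x := A) (y := B)) v
  have hA := degOn_sdiff_add (G := G) (Set.inter_subset_left (s := A) (t := B)) v
  have hB := degOn_sdiff_add (G := G) (Set.inter_subset_right (s := A) (t := B)) v
  rw [Set.sdiff_self_inter] at hA
  rw [Set.sdiff_inter_self_eq_sdiff] at hB
  rw [Set.symmDiff_def, hAB, ← hA, ← hB]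
  simp only [Nat.odd_iff]
  omega

lemma isJoin_self_iff {P : Set G.E} {x : G.V} : G.IsJoin P x x ↔ G.IsEven P := by
  simp [IsJoin, IsEven]

lemma IsEven.isJoin {P : Set G.E} (h : G.IsEven P) (x : G.V) : G.IsJoin P x x :=
  isJoin_self_iff.mpr h

lemma IsJoin.symm {P : Set G.E} {x y : G.V} (h : G.IsJoin P x y) : G.IsJoin P y x :=
  fun v => (h v).trans (not_congr iff_comm)

lemma IsJoin.symmDiff {A B : Set G.E} {x y z : G.V} (hA : G.IsJoin A x y) (hB : G.IsJoin B y z) :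
    G.IsJoin (symmDiff A B) x z := by
  intro v
  rw [odd_degOn_symmDiff, hA v, hB v]
  tauto

lemma IsEven.symmDiff {A B : Set G.E} (hA : G.IsEven A) (hB : G.IsEven B) :
    G.IsEven (symmDiff A B) := by
  intro v
  exact isJoin_self_iff.mp ((hA.isJoin v).symmDiff (hB.isJoin v)) v

lemma IsEven.union {A B : Set G.E} (hA : G.IsEven A) (hB : G.IsEven B) (h : Disjoint A B) :
    G.IsEven (A ∪ B) := by
  simpa only [h.symmDiff_eq_sup, Set.sup_eq_union] using hA.symmDiff hB

lemma IsEven.sdiff {A B : Set G.E} (hA : G.IsEven A) (hB : G.IsEven B) (h : B ⊆ A) :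
    G.IsEven (A \ B) := by
  simpa only [symmDiff_of_ge h] using hA.symmDiff hB

lemma isJoin_empty (x : G.V) : G.IsJoin ∅ x x := by
  simp [IsJoin, degOn]

lemma isJoin_singleton {e : G.E} {x y : G.V} (h : G.ends e = s(x, y)) : G.IsJoin {e} x y := by
  have hxy : x ≠ y := fun hxy => G.noLoop e (by rw [h, hxy]; exact Sym2.mk_isDiag_iff.mpr rfl)
  intro v
  simp only [degOn_singleton, h, Sym2.mem_iff]
  by_cases hx : v = x <;> by_cases hy : v = y <;> simp_all

lemma IsJoin.nonempty {P : Set G.E} {x y : G.V} (h : G.IsJoin P x y) (hxy : x ≠ y) :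
    P.Nonempty := by
  obtain ⟨e, he, -⟩ := degOn_pos.mp ((h x).mpr (by simpa using hxy)).pos
  exact ⟨e, he⟩

lemma AdjOn.symm {F : Set G.E} {a b : G.V} (h : G.AdjOn F a b) : G.AdjOn F b a := by
  obtain ⟨e, he, hends⟩ := h
  exact ⟨e, he, hends.trans Sym2.eq_swap⟩

lemma ReachOn.symm {F : Set G.E} {a b : G.V} (h : G.ReachOn F a b) : G.ReachOn F b a := by
  induction h with
  | refl => exact Relation.ReflTransGen.refl
  | tail _ hadj ih => exact ih.head hadj.symm

lemma reachOn_of_mem_ends {F : Set G.E} {e : G.E} (he : e ∈ F) {a b : G.V}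
    (ha : a ∈ G.ends e) (hb : b ∈ G.ends e) : G.ReachOn F a b := by
  by_cases hab : a = b
  · exact hab ▸ Relation.ReflTransGen.refl
  · exact Relation.ReflTransGen.single ⟨e, he, (Sym2.mem_and_mem_iff hab).mp ⟨ha, hb⟩⟩

lemma exists_isJoin {F : Set G.E} {x y : G.V} (h : G.ReachOn F x y) :
    ∃ P ⊆ F, G.IsJoin P x y := by
  induction h with
  | refl => exact ⟨∅, Set.empty_subset F, isJoin_empty x⟩
  | tail _ hadj ih =>
    obtain ⟨P, hPF, hP⟩ := ih
    obtain ⟨e, he, hends⟩ := hadj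
    refine ⟨symmDiff P {e}, fun f hf => ?_, hP.symmDiff (isJoin_singleton hends)⟩
    rcases (symmDiff_le_sup : symmDiff P {e} ≤ P ∪ {e}) hf with hf | rfl
    exacts [hPF hf, he]

lemma even_sum_degOn (F : Set G.E) [Fintype G.V] : Even (∑ v, G.degOn F v) := by
  have := G.finE
  have : Fintype G.E := Fintype.ofFinite _
  have hdeg : ∀ v, G.degOn F v = ∑ e ∈ F.toFinset, if v ∈ G.ends e then 1 else 0 := by
    intro v
    rw [Finset.sum_boole, degOn, ← Set.ncard_coe_finset]
    congr 1
    ext e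
    simp
  have hends : ∀ e, (∑ v, if v ∈ G.ends e then 1 else 0) = 2 := by
    intro e
    rw [Finset.sum_boole, ← Sym2.card_toFinset_of_not_isDiag _ (G.noLoop e)]
    simp only [Nat.cast_id]
    congr 1
    ext v
    simp
  simp only [hdeg]
  rw [Finset.sum_comm, Finset.sum_congr rfl fun e _ => hends e]
  exact Finset.even_sum _ fun _ _ => even_two

lemma exists_ne_odd_degOn {F : Set G.E} {x : G.V} (hx : Odd (G.degOn F x)) :
    ∃ y ≠ x, Odd (G.degOn F y) := by
  have := G.finV
  have : Fintype G.V := Fintype.ofFinite _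
  by_contra! h
  have hrest : Even (∑ v ∈ Finset.univ.erase x, G.degOn F v) :=
    Finset.even_sum _ fun v hv => Nat.not_odd_iff_even.mp (h v (Finset.ne_of_mem_erase hv))
  have htotal := even_sum_degOn (G := G) F
  rw [← Finset.add_sum_erase _ _ (Finset.mem_univ x)] at htotal
  exact Nat.not_even_iff_odd.mpr hx ((Nat.even_add.mp htotal).mpr hrest)

lemma componentEdges_subset (F : Set G.E) (x : G.V) : G.componentEdges F x ⊆ F :=
  fun _ he => he.1

lemma degOn_componentEdges (F : Set G.E) (x v : G.V) :
    G.degOn (G.componentEdges F x) v = if G.ReachOn F x v then G.degOn F v else 0 := by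
  split_ifs with hxv
  · rw [degOn, degOn]
    congr 1
    ext e
    exact ⟨fun ⟨⟨he, _⟩, hv⟩ => ⟨he, hv⟩, fun ⟨he, hv⟩ => ⟨⟨he, v, hv, hxv⟩, hv⟩⟩
  · rw [degOn_eq_zero]
    rintro e ⟨he, a, ha, hxa⟩ hv
    exact hxv (hxa.trans (reachOn_of_mem_ends he ha hv))

lemma IsEven.componentEdges {F : Set G.E} (hF : G.IsEven F) (x : G.V) :
    G.IsEven (G.componentEdges F x) := by
  intro v
  rw [degOn_componentEdges]
  split_ifs
  exacts [hF v, Even.zero]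

lemma exists_odd_degOn_reachOn {F : Set G.E} {x : G.V} (hx : Odd (G.degOn F x)) :
    ∃ y ≠ x, Odd (G.degOn F y) ∧ G.ReachOn F x y := by
  have hx' : Odd (G.degOn (G.componentEdges F x) x) := by
    rwa [degOn_componentEdges, if_pos (show G.ReachOn F x x from Relation.ReflTransGen.refl)]
  obtain ⟨y, hyx, hy⟩ := exists_ne_odd_degOn hx'
  rw [degOn_componentEdges] at hy
  split_ifs at hy with hxy
  · exact ⟨y, hyx, hy, hxy⟩
  · exact absurd hy Nat.not_odd_zero

lemma IsJoin.reachOn {P : Set G.E} {x y : G.V} (h : G.IsJoin P x y) (hxy : x ≠ y) :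
    G.ReachOn P x y := by
  obtain ⟨z, hzx, hz, hxz⟩ := exists_odd_degOn_reachOn ((h x).mpr (by simpa using hxy))
  have hzy : z = y := by
    by_contra hzy
    exact (h z).mp hz (by simp [hzx, hzy])
  exact hzy ▸ hxz

lemma degOn_le_two_of_minimal {Z : Set G.E}
    (hZ : Minimal (fun Z => Z.Nonempty ∧ G.IsEven Z) Z) (v : G.V) : G.degOn Z v ≤ 2 := by
  have := G.finE
  by_contra! hv
  obtain ⟨T, hTv, hT⟩ := Set.exists_subset_card_eq (show 3 ≤ G.degOn Z v by omega)
  have hTZ : T ⊆ Z := fun e he => (hTv he).1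
  have hdegT : G.degOn T v = 3 := by
    rw [← hT, degOn]
    congr 1
    ext e
    exact ⟨fun h => h.1, fun h => ⟨h, (hTv h).2⟩⟩
  have hW := fun w => degOn_sdiff_add hTZ w
  have hZev := fun w => Nat.even_iff.mp (hZ.prop.2 w)
  have hWv : Odd (G.degOn (Z \ T) v) := by
    have := hW v
    have := hZev v
    rw [Nat.odd_iff]
    omega
  -- Removing three edges `T` at `v` makes `v` odd. The odd vertex `y` that `v` reaches in `Z \ T`
  -- is the far end of some `e ∈ T`, and a `{v, y}`-join closes up with `e` alone into an even set
  -- that misses the other edges of `T`.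
  obtain ⟨y, hyv, hy, hvy⟩ := exists_odd_degOn_reachOn hWv
  obtain ⟨e, heT, hye⟩ : ∃ e ∈ T, y ∈ G.ends e := by
    by_contra! h
    have := hW y
    have := hZev y
    rw [degOn_eq_zero.mpr h, Nat.odd_iff] at *
    omega
  have hends : G.ends e = s(y, v) := (Sym2.mem_and_mem_iff hyv).mp ⟨hye, (hTv heT).2⟩
  obtain ⟨e', he'T, he'e⟩ := Set.exists_ne_of_one_lt_ncard (by omega : 1 < T.ncard) e
  obtain ⟨R, hRW, hR⟩ := exists_isJoin hvy
  have hRe : Disjoint R {e} := Set.disjoint_singleton_right.mpr fun h => (hRW h).2 heT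
  have hRe_even : G.IsEven (R ∪ {e}) := by
    have := hR.symmDiff (isJoin_singleton hends)
    rw [hRe.symmDiff_eq_sup] at this
    exact isJoin_self_iff.mp this
  have hRe_sub : R ∪ {e} ⊆ Z :=
    Set.union_subset (hRW.trans Set.sdiff_subset) (Set.singleton_subset_iff.mpr (hTZ heT))
  rcases hZ.2 ⟨⟨e, Or.inr rfl⟩, hRe_even⟩ hRe_sub (hTZ he'T) with h | h
  exacts [(hRW h).2 he'T, he'e h]

lemma isCycle_of_minimal {Z : Set G.E} (hZ : Minimal (fun Z => Z.Nonempty ∧ G.IsEven Z) Z) :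
    G.IsCycle Z := by
  refine ⟨hZ.prop.1, fun v => ?_, fun e he f hf a b ha hb => ?_⟩
  · obtain ⟨k, hk⟩ := hZ.prop.2 v
    have := degOn_le_two_of_minimal hZ v
    omega
  · have hcomp : Z ⊆ G.componentEdges Z a :=
      hZ.2 ⟨⟨e, he, a, ha, .refl⟩, hZ.prop.2.componentEdges a⟩
        (componentEdges_subset Z a)
    obtain ⟨-, c, hc, hac⟩ := hcomp hf
    exact hac.trans (reachOn_of_mem_ends hf hc hb)

lemma exists_isCycle_subset {F : Set G.E} (hne : F.Nonempty) (hF : G.IsEven F) :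
    ∃ C ⊆ F, G.IsCycle C := by
  have := G.finE
  obtain ⟨Z, hZF, hZ⟩ :=
    exists_minimal_le_of_wellFoundedLT (fun Z => Z.Nonempty ∧ G.IsEven Z) F ⟨hne, hF⟩
  exact ⟨Z, hZF, isCycle_of_minimal hZ⟩

lemma IsCycle.isEven {C : Set G.E} (hC : G.IsCycle C) : G.IsEven C := fun v => by
  rcases hC.2.1 v with h | h <;> rw [h] <;> decide

lemma IsCycle.degOn_eq_two {C : Set G.E} (hC : G.IsCycle C) {v : G.V}
    (hv : v ∈ G.VertexSetOf C) : G.degOn C v = 2 :=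
  (hC.2.1 v).resolve_left (degOn_pos.mpr hv).ne'

lemma IsCycle.reachOn {C : Set G.E} (hC : G.IsCycle C) {a b : G.V}
    (ha : a ∈ G.VertexSetOf C) (hb : b ∈ G.VertexSetOf C) : G.ReachOn C a b := by
  obtain ⟨e, he, hae⟩ := ha
  obtain ⟨f, hf, hbf⟩ := hb
  exact hC.2.2 e he f hf a b hae hbf

lemma ReachOn.exists_edge_reachOn_avoiding {F : Set G.E} {u b : G.V} (h : G.ReachOn F u b)
    (hu : u ≠ b) : ∃ e ∈ F, ∃ p, G.ends e = s(b, p) ∧ G.ReachOn (F \ G.incidenceSet b) u p := by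
  induction h using Relation.ReflTransGen.head_induction_on with
  | refl => exact absurd rfl hu
  | @head u u' hadj _ ih =>
    obtain ⟨e, he, hends⟩ := hadj
    by_cases hu' : u' = b
    · exact ⟨e, he, u, hu' ▸ hends.trans Sym2.eq_swap, Relation.ReflTransGen.refl⟩
    · obtain ⟨g, hg, p, hgp, hu'p⟩ := ih hu'
      have hbe : b ∉ G.ends e := by
        rw [hends, Sym2.mem_iff]
        rintro (h | h)
        exacts [hu h.symm, hu' h.symm]
      exact ⟨g, hg, p, hgp, hu'p.head ⟨e, ⟨he, hbe⟩, hends⟩⟩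

lemma IsCycle.reachOn_diff_incidenceSet {C : Set G.E} (hC : G.IsCycle C) {a b c : G.V}
    (ha : a ∈ G.VertexSetOf C) (hb : b ∈ G.VertexSetOf C) (hc : c ∈ G.VertexSetOf C)
    (hab : a ≠ b) (hcb : c ≠ b) : G.ReachOn (C \ G.incidenceSet b) a c := by
  have := G.finE
  obtain ⟨e, he, p, hep, hap⟩ := (hC.reachOn ha hb).exists_edge_reachOn_avoiding hab
  obtain ⟨f, hf, q, hfq, hcq⟩ := (hC.reachOn hc hb).exists_edge_reachOn_avoiding hcb
  refine hap.trans (Relation.ReflTransGen.trans ?_ hcq.symm)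
  by_cases hpq : p = q
  · exact hpq ▸ Relation.ReflTransGen.refl
  have hef : e ≠ f := by
    rintro rfl
    exact hpq (Sym2.congr_right.mp (hep.symm.trans hfq))
  have hefC : {e, f} ⊆ C := Set.insert_subset he (Set.singleton_subset_iff.mpr hf)
  have hstar : {e, f} = C ∩ G.incidenceSet b := by
    refine Set.eq_of_subset_of_ncard_le ?_ ?_
    · rintro g (rfl | rfl)
      exacts [⟨he, show b ∈ G.ends g by rw [hep]; exact Sym2.mem_mk_left _ _⟩,
        ⟨hf, show b ∈ G.ends g by rw [hfq]; exact Sym2.mem_mk_left _ _⟩]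
    · rw [Set.ncard_pair hef]
      exact (hC.degOn_eq_two hb).le
  have hjoin : G.IsJoin {e, f} p q := by
    have := (isJoin_singleton (hep.trans Sym2.eq_swap)).symmDiff (isJoin_singleton hfq)
    rwa [(Set.disjoint_singleton.mpr hef).symmDiff_eq_sup] at this
  have hdiff := (hC.isEven.isJoin p).symmDiff hjoin
  rw [symmDiff_of_ge hefC, hstar, Set.sdiff_self_inter] at hdiff
  exact hdiff.reachOn hpq

lemma IsCycle.isCycleDecompOn_singleton {C : Set G.E} (hC : G.IsCycle C) :
    G.IsCycleDecompOn C {C} :=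
  ⟨by rintro _ rfl; exact ⟨hC, le_rfl⟩, fun _ he => ⟨C, ⟨rfl, he⟩, fun _ h => h.1⟩⟩

lemma IsCycleDecompOn.union {F₁ F₂ : Set G.E} {D₁ D₂ : Set (Set G.E)}
    (h₁ : G.IsCycleDecompOn F₁ D₁) (h₂ : G.IsCycleDecompOn F₂ D₂) (hF : Disjoint F₁ F₂) :
    G.IsCycleDecompOn (F₁ ∪ F₂) (D₁ ∪ D₂) := by
  refine ⟨?_, ?_⟩
  · rintro C (hC | hC)
    exacts [⟨(h₁.1 C hC).1, (h₁.1 C hC).2.trans Set.subset_union_left⟩,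
      ⟨(h₂.1 C hC).1, (h₂.1 C hC).2.trans Set.subset_union_right⟩]
  · rintro e (he | he)
    · obtain ⟨C, hC, huniq⟩ := h₁.2 e he
      refine ⟨C, ⟨Or.inl hC.1, hC.2⟩, ?_⟩
      rintro C' ⟨hC' | hC', heC'⟩
      exacts [huniq C' ⟨hC', heC'⟩, (Set.disjoint_left.mp hF he ((h₂.1 C' hC').2 heC')).elim]
    · obtain ⟨C, hC, huniq⟩ := h₂.2 e he
      refine ⟨C, ⟨Or.inr hC.1, hC.2⟩, ?_⟩
      rintro C' ⟨hC' | hC', heC'⟩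
      exacts [(Set.disjoint_left.mp hF ((h₁.1 C' hC').2 heC') he).elim, huniq C' ⟨hC', heC'⟩]

lemma IsCycleDecompOn.ncard_union {F₁ F₂ : Set G.E} {D₁ D₂ : Set (Set G.E)}
    (h₁ : G.IsCycleDecompOn F₁ D₁) (h₂ : G.IsCycleDecompOn F₂ D₂) (hF : Disjoint F₁ F₂) :
    (D₁ ∪ D₂).ncard = D₁.ncard + D₂.ncard := by
  have := G.finE
  refine Set.ncard_union_eq (Set.disjoint_left.mpr fun C hC₁ hC₂ => ?_)
  obtain ⟨e, he⟩ := (h₁.1 C hC₁).1.1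
  exact Set.disjoint_left.mp hF ((h₁.1 C hC₁).2 he) ((h₂.1 C hC₂).2 he)

/-- Veblen's theorem. -/
lemma exists_isCycleDecompOn {F : Set G.E} (hF : G.IsEven F) : ∃ D, G.IsCycleDecompOn F D := by
  have := G.finE
  induction F using WellFoundedLT.induction with
  | _ F ih =>
  rcases F.eq_empty_or_nonempty with rfl | hne
  · exact ⟨∅, fun _ h => h.elim, fun _ he => he.elim⟩
  obtain ⟨C, hCF, hC⟩ := exists_isCycle_subset hne hF
  obtain ⟨e, he⟩ := hC.1
  obtain ⟨D, hD⟩ := ih (F \ C) (Set.sdiff_ssubset_left_iff.mpr ⟨e, hCF he, he⟩)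
    (hF.sdiff hC.isEven hCF)
  have := hC.isCycleDecompOn_singleton.union hD Set.disjoint_sdiff_right
  rw [Set.union_sdiff_cancel hCF] at this
  exact ⟨_, this⟩

lemma IsCycleDecompOn.two_le_ncard {F : Set G.E} {D : Set (Set G.E)}
    (hD : G.IsCycleDecompOn F D) {v : G.V} (hv : 2 < G.degOn F v) : 2 ≤ D.ncard := by
  have := G.finE
  by_contra! hlt
  obtain ⟨e, he, -⟩ := degOn_pos.mp (by omega : 0 < G.degOn F v)
  obtain ⟨C, ⟨hC, -⟩, -⟩ := hD.2 e he
  have hFC : F ⊆ C := fun f hf => by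
    obtain ⟨C', ⟨hC', hfC'⟩, -⟩ := hD.2 f hf
    exact (Set.ncard_le_one_iff (Set.toFinite D)).mp (by omega) hC' hC ▸ hfC'
  have := degOn_mono hFC v
  rcases (hD.1 C hC).1.2.1 v with h | h <;> omega

lemma IsEulerian.isEven_univ (hE : G.IsEulerian) : G.IsEven Set.univ := by
  obtain ⟨vs, es, hlen, hends, hclosed, hnodup, hall⟩ := hE
  have hprefix : ∀ k (hk : k ≤ es.length),
      G.IsJoin {e | e ∈ es.take k} (vs[0]'(by omega)) (vs[k]'(by omega)) := by
    intro k hk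
    induction k with
    | zero => simpa using isJoin_empty _
    | succ k ih =>
      have hk' : k < es.length := hk
      have hnew : es[k] ∉ es.take k := by
        intro h
        obtain ⟨i, hi, hik⟩ := List.getElem_of_mem h
        rw [List.getElem_take] at hik
        have := hnodup.getElem_inj_iff.mp hik
        simp only [List.length_take] at hi
        omega
      have hstep := (ih hk'.le).symmDiff
        (isJoin_singleton (hends k es[k] vs[k] vs[k + 1] (by simp) (by simp) (by simp)))
      rw [(Set.disjoint_singleton_right (s := {e | e ∈ es.take k})).mpr hnew |>.symmDiff_eq_sup]
        at hstep
      convert hstep using 1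
      ext e
      simp only [Set.mem_ofPred_eq, Set.sup_eq_union, Set.mem_union, Set.mem_singleton_iff,
        List.take_add_one, List.getElem?_eq_getElem hk', Option.toList_some, List.mem_append,
        List.mem_singleton]
  have hlast : vs[es.length]'(by omega) = vs[0]'(by omega) := by
    rw [List.head?_eq_getElem?, List.getLast?_eq_getElem?] at hclosed
    simp_all
  have := hprefix es.length le_rfl
  simp only [List.take_length, hall, Set.ofPred_true, hlast] at this
  exact isJoin_self_iff.mp this

lemma c_lt_nu_of_isCycleDecompOn (hE : G.IsEven Set.univ) {F : Set G.E} (hF : G.IsEven F)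
    {D₁ D₂ : Set (Set G.E)} (h₁ : G.IsCycleDecompOn F D₁) (h₂ : G.IsCycleDecompOn F D₂)
    (hlt : D₁.ncard < D₂.ncard) : G.c < G.nu := by
  have := G.finE
  obtain ⟨R, hR⟩ := exists_isCycleDecompOn (hE.sdiff hF (Set.subset_univ F))
  have hdisj : Disjoint F (Set.univ \ F) := Set.disjoint_sdiff_right
  have hcover : F ∪ (Set.univ \ F) = Set.univ := Set.union_sdiff_cancel (Set.subset_univ F)
  have hc : G.c ≤ (D₁ ∪ R).ncard := Nat.sInf_le ⟨_, hcover ▸ h₁.union hR hdisj, rfl⟩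
  have hnu : (D₂ ∪ R).ncard ≤ G.nu :=
    le_csSup ⟨Nat.card (Set G.E), fun _ ⟨D, _, hD⟩ => hD ▸ Set.ncard_le_card D⟩
      ⟨_, hcover ▸ h₂.union hR hdisj, rfl⟩
  rw [h₁.ncard_union hR hdisj] at hc
  rw [h₂.ncard_union hR hdisj] at hnu
  omega

lemma IsCycle.exists_isCycle_subset_union_avoiding {C₁ C₂ : Set G.E} (h₁ : G.IsCycle C₁)
    (h₂ : G.IsCycle C₂) (hd : Disjoint C₁ C₂) {a b c : G.V}
    (ha : a ∈ G.VertexSetOf C₁ ∩ G.VertexSetOf C₂) (hb : b ∈ G.VertexSetOf C₁ ∩ G.VertexSetOf C₂)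
    (hc : c ∈ G.VertexSetOf C₁ ∩ G.VertexSetOf C₂) (hab : a ≠ b) (hac : a ≠ c) (hbc : b ≠ c) :
    ∃ K ⊆ C₁ ∪ C₂, G.IsCycle K ∧ G.degOn K b = 0 := by
  obtain ⟨P₁, hP₁, hP₁j⟩ :=
    exists_isJoin (h₁.reachOn_diff_incidenceSet ha.1 hb.1 hc.1 hab hbc.symm)
  obtain ⟨P₂, hP₂, hP₂j⟩ :=
    exists_isJoin (h₂.reachOn_diff_incidenceSet ha.2 hb.2 hc.2 hab hbc.symm)
  have hP_even : G.IsEven (P₁ ∪ P₂) := by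
    have := hP₁j.symmDiff hP₂j.symm
    rw [(hd.mono (hP₁.trans Set.sdiff_subset) (hP₂.trans Set.sdiff_subset)).symmDiff_eq_sup]
      at this
    exact isJoin_self_iff.mp this
  obtain ⟨K, hK, hKcyc⟩ :=
    exists_isCycle_subset ((hP₁j.nonempty hac).mono Set.subset_union_left) hP_even
  refine ⟨K, hK.trans (Set.union_subset_union (hP₁.trans Set.sdiff_subset)
    (hP₂.trans Set.sdiff_subset)), hKcyc, degOn_eq_zero.mpr fun e he => ?_⟩
  rcases hK he with h | h
  exacts [(hP₁ h).2, (hP₂ h).2]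

lemma exists_isCycleDecompOn_three_le_ncard {F K : Set G.E} (hF : G.IsEven F)
    (hK : G.IsCycle K) (hKF : K ⊆ F) {v : G.V} (hKv : G.degOn K v = 0)
    (hFv : 2 < G.degOn F v) : ∃ D, G.IsCycleDecompOn F D ∧ 3 ≤ D.ncard := by
  obtain ⟨D, hD⟩ := exists_isCycleDecompOn (hF.sdiff hK.isEven hKF)
  have hD2 : 2 ≤ D.ncard := hD.two_le_ncard (v := v) (by
    have := degOn_sdiff_add hKF v
    omega)
  have hKD := hK.isCycleDecompOn_singleton.union hD Set.disjoint_sdiff_right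
  rw [Set.union_sdiff_cancel hKF] at hKD
  refine ⟨_, hKD, ?_⟩
  rw [hK.isCycleDecompOn_singleton.ncard_union hD Set.disjoint_sdiff_right, Set.ncard_singleton]
  omega

end MGraph

/-- an Eulerian multigraph containing two edge-disjoint cycles
with more than two common vertices has non-unique cycle number. -/
theorem cycles_sharing_three_implies_gap (G : MGraph) (hE : G.IsEulerian)
    (C1 C2 : Set G.E) (h1 : G.IsCycle C1) (h2 : G.IsCycle C2)
    (hd : Disjoint C1 C2)
    (hshare : 2 < (G.VertexSetOf C1 ∩ G.VertexSetOf C2).ncard) :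
    G.c < G.nu := by
  have := G.finV
  obtain ⟨a, ha, b, hb, c, hc, hab, hac, hbc⟩ := (Set.two_lt_ncard (Set.toFinite _)).mp hshare
  obtain ⟨K, hKU, hK, hKb⟩ := h1.exists_isCycle_subset_union_avoiding h2 hd ha hb hc hab hac hbc
  have hU : G.IsEven (C1 ∪ C2) := h1.isEven.union h2.isEven hd
  have hUb : G.degOn (C1 ∪ C2) b = 4 := by
    rw [MGraph.degOn_union hd, h1.degOn_eq_two hb.1, h2.degOn_eq_two hb.2]
  obtain ⟨D, hD, hD3⟩ := MGraph.exists_isCycleDecompOn_three_le_ncard hU hK hKU hKb (by omega)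
  have hpair := h1.isCycleDecompOn_singleton.union h2.isCycleDecompOn_singleton hd
  refine MGraph.c_lt_nu_of_isCycleDecompOn hE.isEven_univ hU hpair hD ?_
  rw [h1.isCycleDecompOn_singleton.ncard_union h2.isCycleDecompOn_singleton hd,
    Set.ncard_singleton, Set.ncard_singleton]
  omega
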